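/- Under the setup of the alternating minimization for F(X1, C, B, D) = ‖(A1 − X1) ⊙ W1‖_F² + ‖A2 − X1C − BD‖_F² (sequences (X1)_p, C_p, B_p, D_p satisfying the first-order stationarity equations of the update rules, m_p = F((X1)_p, C_p, B_p, D_p)), one has for all p: m_p − m_{p+1} ≥ ‖((X1)_p − (X1)_{p+1}) ⊙ W1‖_F². -/
import Mathlib


open Matrix Filter Topology

noncomputable def frob {α β : Type*} [Fintype α] [Fintype β] (M : Matrix α β ℝ) : ℝ :=
  Real.sqrt (∑ i, ∑ j, (M i j) ^ 2)

noncomputable def projCol {m k : ℕ} (B : Matrix (Fin m) (Fin k) ℝ) :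
    Matrix (Fin m) (Fin m) ℝ :=
  B * (Bᵀ * B)⁻¹ * Bᵀ

namespace Stmt14Aux

variable {α β γ : Type*} [Fintype α] [Fintype β] [Fintype γ]

noncomputable def fsq (M : Matrix α β ℝ) : ℝ := ∑ i, ∑ j, (M i j) ^ 2

noncomputable def ip (M N : Matrix α β ℝ) : ℝ := ∑ i, ∑ j, M i j * N i j

lemma fsq_nonneg (M : Matrix α β ℝ) : 0 ≤ fsq M :=
  Finset.sum_nonneg fun _ _ => Finset.sum_nonneg fun _ _ => sq_nonneg _

lemma frob_sq (M : Matrix α β ℝ) : frob M ^ 2 = fsq M :=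
  Real.sq_sqrt (fsq_nonneg M)

lemma fsq_sub (R S : Matrix α β ℝ) :
    fsq (R - S) = fsq R - 2 * ip R S + fsq S := by
  simp only [fsq, ip, Matrix.sub_apply]
  rw [Finset.mul_sum, ← Finset.sum_sub_distrib, ← Finset.sum_add_distrib]
  refine Finset.sum_congr rfl fun i _ => ?_
  rw [Finset.mul_sum, ← Finset.sum_sub_distrib, ← Finset.sum_add_distrib]
  exact Finset.sum_congr rfl fun j _ => by ring

lemma ip_mul_right (R : Matrix α β ℝ) (Δ : Matrix α γ ℝ) (C : Matrix γ β ℝ) :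
    ip R (Δ * C) = ip (R * Cᵀ) Δ := by
  simp only [ip, Matrix.mul_apply, Matrix.transpose_apply]
  refine Finset.sum_congr rfl fun i _ => ?_
  simp_rw [Finset.mul_sum, Finset.sum_mul]
  rw [Finset.sum_comm]
  exact Finset.sum_congr rfl fun j _ => Finset.sum_congr rfl fun t _ => by ring

lemma ip_transpose (M N : Matrix α β ℝ) : ip Mᵀ Nᵀ = ip M N := by
  simp only [ip, Matrix.transpose_apply]
  exact Finset.sum_comm

lemma ip_mul_left (R : Matrix α β ℝ) (X : Matrix α γ ℝ) (Δ : Matrix γ β ℝ) :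
    ip R (X * Δ) = ip (Xᵀ * R) Δ := by
  rw [← ip_transpose R (X * Δ), Matrix.transpose_mul,
    ip_mul_right Rᵀ Δᵀ Xᵀ, Matrix.transpose_transpose,
    show Rᵀ * X = (Xᵀ * R)ᵀ by rw [Matrix.transpose_mul, Matrix.transpose_transpose],
    ip_transpose]

lemma ip_had (A Δ W : Matrix α β ℝ) :
    ip (Matrix.hadamard A W) (Matrix.hadamard Δ W) =
      ip (Matrix.hadamard (Matrix.hadamard A W) W) Δ := by
  simp only [ip, Matrix.hadamard_apply]
  exact Finset.sum_congr rfl fun i _ => Finset.sum_congr rfl fun j _ => by ring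

lemma ip_neg_left (M N : Matrix α β ℝ) : ip (-M) N = -ip M N := by
  simp [ip, Finset.sum_neg_distrib]

lemma had_sub (A B W : Matrix α β ℝ) :
    Matrix.hadamard (A - B) W = Matrix.hadamard A W - Matrix.hadamard B W := by
  ext i j
  simp [Matrix.hadamard_apply, sub_mul]

end Stmt14Aux

open Stmt14Aux

/-- **Corollary 4.2 (ii).** `m_p − m_{p+1} ≥ ‖((X1)_p − (X1)_{p+1}) ⊙ W1‖_F²` for all `p`. -/
theorem stmt_14
    {m k l s : ℕ}
    (A1 : Matrix (Fin m) (Fin k) ℝ) (A2 : Matrix (Fin m) (Fin l) ℝ)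
    (W1 : Matrix (Fin m) (Fin k) ℝ) (hW1 : ∀ i j, 0 < W1 i j)
    (X1 : ℕ → Matrix (Fin m) (Fin k) ℝ) (C : ℕ → Matrix (Fin k) (Fin l) ℝ)
    (B : ℕ → Matrix (Fin m) (Fin s) ℝ) (D : ℕ → Matrix (Fin s) (Fin l) ℝ)
    (mseq : ℕ → ℝ)
    (hm : ∀ p, mseq p = frob (Matrix.hadamard (A1 - X1 p) W1) ^ 2 +
      frob (A2 - X1 p * C p - B p * D p) ^ 2)
    (heq1 : ∀ p, Matrix.hadamard (Matrix.hadamard (X1 (p + 1) - A1) W1) W1 =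
      (A2 - X1 (p + 1) * C p - B p * D p) * (C p)ᵀ)
    (heq2 : ∀ p, (X1 (p + 1))ᵀ * (A2 - X1 (p + 1) * C (p + 1) - B p * D p) = 0)
    (heq3 : ∀ p, (A2 - X1 (p + 1) * C (p + 1) - B (p + 1) * D p) * (D p)ᵀ = 0)
    (heq4 : ∀ p, (B (p + 1))ᵀ * (A2 - X1 (p + 1) * C (p + 1) - B (p + 1) * D (p + 1)) = 0)
    :
    ∀ p, frob (Matrix.hadamard (X1 p - X1 (p + 1)) W1) ^ 2 ≤ mseq p - mseq (p + 1) := by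
  intro p
  have h1 := heq1 p
  have h2 := heq2 p
  have h3 := heq3 p
  have h4 := heq4 p
  set Xs := X1 (p + 1) with hXs
  set Δ1 := X1 p - Xs with hΔ1
  set Δ2 := C p - C (p + 1) with hΔ2
  set Δ3 := B p - B (p + 1) with hΔ3
  set Δ4 := D p - D (p + 1) with hΔ4
  set R1 := A2 - Xs * C p - B p * D p with hR1
  set R2 := A2 - Xs * C (p + 1) - B p * D p with hR2
  set R3 := A2 - Xs * C (p + 1) - B (p + 1) * D p with hR3
  set R4 := A2 - Xs * C (p + 1) - B (p + 1) * D (p + 1) with hR4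
  rw [hm p, hm (p + 1), frob_sq, frob_sq, frob_sq, frob_sq, frob_sq]
  -- Step 1 : decrease from the X1-update
  have e1a : A1 - X1 p = (A1 - Xs) - Δ1 := by rw [hΔ1]; abel
  have e1b : A2 - X1 p * C p - B p * D p = R1 - Δ1 * C p := by
    rw [hR1, hΔ1, Matrix.sub_mul]; abel
  have key1 : fsq (Matrix.hadamard (A1 - X1 p) W1) + fsq (A2 - X1 p * C p - B p * D p)
      = fsq (Matrix.hadamard (A1 - Xs) W1) + fsq R1
        + fsq (Matrix.hadamard Δ1 W1) + fsq (Δ1 * C p) := by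
    rw [e1a, e1b, had_sub, fsq_sub, fsq_sub, ip_had, ip_mul_right]
    have hneg : Matrix.hadamard (Matrix.hadamard (A1 - Xs) W1) W1 = -(R1 * (C p)ᵀ) := by
      rw [← h1]
      ext i j
      simp [Matrix.hadamard_apply, Matrix.sub_apply]
      ring
    rw [hneg, ip_neg_left]
    ring
  -- Step 2 : decrease from the C-update
  have e2 : R1 = R2 - Xs * Δ2 := by
    rw [hR1, hR2, hΔ2, Matrix.mul_sub]; abel
  have key2 : fsq R1 = fsq R2 + fsq (Xs * Δ2) := by
    rw [e2, fsq_sub, ip_mul_left, h2]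
    simp [ip]
  -- Step 3 : decrease from the B-update
  have e3 : R2 = R3 - Δ3 * D p := by
    rw [hR2, hR3, hΔ3, Matrix.sub_mul]; abel
  have key3 : fsq R2 = fsq R3 + fsq (Δ3 * D p) := by
    rw [e3, fsq_sub, ip_mul_right, h3]
    simp [ip]
  -- Step 4 : decrease from the D-update
  have e4 : R3 = R4 - B (p + 1) * Δ4 := by
    rw [hR3, hR4, hΔ4, Matrix.mul_sub]; abel
  have key4 : fsq R3 = fsq R4 + fsq (B (p + 1) * Δ4) := by
    rw [e4, fsq_sub, ip_mul_left, h4]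
    simp [ip]
  have n1 := fsq_nonneg (Δ1 * C p)
  have n2 := fsq_nonneg (Xs * Δ2)
  have n3 := fsq_nonneg (Δ3 * D p)
  have n4 := fsq_nonneg (B (p + 1) * Δ4)
  have hfinal : A2 - Xs * C (p + 1) - B (p + 1) * D (p + 1) = R4 := by rw [hR4]
  rw [hfinal]
  linarith [key1, key2, key3, key4]
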